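/- Let T > 0 and 0 < c < d. Let w_n, W : (0,T)×[c,d] → ℝ (n ∈ ℕ) be continuous functions whose partial derivatives ∂_y w_n and ∂_y W in the second variable exist and are continuous on (0,T)×[c,d], and suppose ∫_0^T ∫_c^d [(w_n(t,y) − W(t,y))² + (∂_y w_n(t,y) − ∂_y W(t,y))²] dy dt → 0 as n → ∞. Define V_n(t,x) := inf_{y∈[c,d]}(w_n(t,y) + x·y) and V(t,x) := inf_{y∈[c,d]}(W(t,y) + x·y). Then ∫_0^T (sup_{x∈ℝ} |V_n(t,x) − V(t,x)|)² dt → 0 as n → ∞. -/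

import Mathlib

open MeasureTheory Set Filter


lemma abs_ciInf_sub_ciInf' {ι : Type*} [Nonempty ι] (f g : ι → ℝ)
    (hf : BddBelow (Set.range f)) (hg : BddBelow (Set.range g)) (M : ℝ)
    (hM : ∀ y, |f y - g y| ≤ M) : |(⨅ y, f y) - ⨅ y, g y| ≤ M := by
  rw [abs_sub_le_iff]
  constructor
  · have h : ∀ y, (⨅ y, f y) - M ≤ g y := fun y => by
      have h1 := ciInf_le hf y
      have h2 := (abs_le.1 (hM y)).2
      linarith
    linarith [le_ciInf h]
  · have h : ∀ y, (⨅ y, g y) - M ≤ f y := fun y => by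
      have h1 := ciInf_le hg y
      have h2 := (abs_le.1 (hM y)).1
      linarith
    linarith [le_ciInf h]

lemma sobolev_bound' {c d : ℝ} (hcd : c < d) {u u' : ℝ → ℝ}
    (hu : ContinuousOn u (Icc c d)) (hu' : ContinuousOn u' (Icc c d))
    (hder : ∀ y ∈ Icc c d, HasDerivWithinAt u (u' y) (Icc c d) y) :
    ∀ y ∈ Icc c d, u y ^ 2 ≤ ((d - c)⁻¹ + 1) * ∫ z in Icc c d, (u z ^ 2 + u' z ^ 2) := by
  intro y hy
  have hpos : (0:ℝ) < d - c := by linarith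
  have hne : (Icc c d).Nonempty := nonempty_Icc.2 hcd.le
  have hc2 : ContinuousOn (fun z => u z ^ 2 + u' z ^ 2) (Icc c d) :=
    (hu.pow 2).add (hu'.pow 2)
  have hint2 : IntervalIntegrable (fun z => u z ^ 2 + u' z ^ 2) volume c d :=
    hc2.intervalIntegrable_of_Icc hcd.le
  set J : ℝ := ∫ z in Icc c d, (u z ^ 2 + u' z ^ 2) with hJ
  have hJeq : J = ∫ z in c..d, (u z ^ 2 + u' z ^ 2) := by
    rw [hJ, integral_Icc_eq_integral_Ioc, ← intervalIntegral.integral_of_le hcd.le]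
  have hJnonneg : 0 ≤ J :=
    setIntegral_nonneg measurableSet_Icc (fun x _ => by positivity)
  -- mean value point
  obtain ⟨z, hz, hzmin⟩ := isCompact_Icc.exists_isMinOn hne (hu.pow 2)
  have hintu2 : IntervalIntegrable (fun z => u z ^ 2) volume c d :=
    (hu.pow 2).intervalIntegrable_of_Icc hcd.le
  have hmean : u z ^ 2 * (d - c) ≤ ∫ t in c..d, u t ^ 2 := by
    have := intervalIntegral.integral_mono_on hcd.le intervalIntegrable_const hintu2
      (fun t ht => hzmin ht)
    simpa [intervalIntegral.integral_const, mul_comm] using this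
  have hstep : ∫ t in c..d, u t ^ 2 ≤ J := by
    rw [hJeq]
    exact intervalIntegral.integral_mono_on hcd.le hintu2 hint2
      (fun t _ => by nlinarith [sq_nonneg (u' t)])
  have hz2 : u z ^ 2 ≤ (d - c)⁻¹ * J := by
    rw [inv_mul_eq_div, le_div_iff₀ hpos]
    linarith
  -- FTC step : |u y ^2 - u z ^2| ≤ J
  have key : ∀ a b : ℝ, a ∈ Icc c d → b ∈ Icc c d → a ≤ b → |u b ^ 2 - u a ^ 2| ≤ J := by
    intro a b ha hb hab
    have hsub : Icc a b ⊆ Icc c d := Icc_subset_Icc ha.1 hb.2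
    have hder' : ∀ x ∈ Ioo a b, HasDerivAt (fun t => u t ^ 2) (2 * u x ^ 1 * u' x) x := by
      intro x hx
      have hx' : x ∈ Ioo c d := ⟨lt_of_le_of_lt ha.1 hx.1, lt_of_lt_of_le hx.2 hb.2⟩
      have : HasDerivAt u (u' x) x :=
        (hder x (hsub ⟨hx.1.le, hx.2.le⟩)).hasDerivAt (Icc_mem_nhds hx'.1 hx'.2)
      simpa using this.fun_pow 2
    have hcontab : ContinuousOn (fun t => u t ^ 2) (Icc a b) := (hu.pow 2).mono hsub
    have hintab : IntervalIntegrable (fun x => 2 * u x ^ 1 * u' x) volume a b :=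
      (((continuousOn_const.mul ((hu.mono hsub).pow 1)).mul
        (hu'.mono hsub)).intervalIntegrable_of_Icc hab)
    have hftc := intervalIntegral.integral_eq_sub_of_hasDerivAt_of_le hab hcontab hder'
      hintab
    have habs : ∀ x ∈ Icc a b, |2 * u x ^ 1 * u' x| ≤ u x ^ 2 + u' x ^ 2 := by
      intro x _
      rw [abs_le]
      constructor <;> nlinarith [sq_nonneg (u x - u' x), sq_nonneg (u x + u' x)]
    have h0 : |∫ x in a..b, 2 * u x ^ 1 * u' x| ≤ ∫ x in a..b, |2 * u x ^ 1 * u' x| :=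
      intervalIntegral.abs_integral_le_integral_abs hab
    have h1 : (∫ x in a..b, |2 * u x ^ 1 * u' x|) ≤ ∫ x in a..b, (u x ^ 2 + u' x ^ 2) :=
      intervalIntegral.integral_mono_on hab hintab.abs (hint2.mono_set (by rw [uIcc_of_le hab, uIcc_of_le hcd.le]; exact hsub)) habs
    have h2 : (∫ x in a..b, (u x ^ 2 + u' x ^ 2)) ≤ J := by
      rw [hJeq]
      apply intervalIntegral.integral_mono_interval ha.1 hab hb.2
      · filter_upwards with t using by positivity
      · exact hint2
    calc |u b ^ 2 - u a ^ 2| = |∫ x in a..b, 2 * u x ^ 1 * u' x| := by rw [hftc]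
      _ ≤ J := le_trans h0 (le_trans h1 h2)
  have hftc2 : u y ^ 2 - u z ^ 2 ≤ J := by
    rcases le_total z y with h | h
    · exact le_trans (le_abs_self _) (key z y hz hy h)
    · have := key y z hy hz h
      rw [abs_sub_comm] at this
      exact le_trans (le_abs_self _) this
  nlinarith

lemma pt_bound' {c d : ℝ} (hcd : c < d) (a b a' b' : ℝ → ℝ)
    (ha : ContinuousOn a (Icc c d)) (hb : ContinuousOn b (Icc c d))
    (ha' : ContinuousOn a' (Icc c d)) (hb' : ContinuousOn b' (Icc c d))
    (hda : ∀ y ∈ Icc c d, HasDerivWithinAt a (a' y) (Icc c d) y)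
    (hdb : ∀ y ∈ Icc c d, HasDerivWithinAt b (b' y) (Icc c d) y) :
    ENNReal.ofReal ((⨆ x : ℝ, |(⨅ y : Icc c d, (a ↑y + x * ↑y)) -
        (⨅ y : Icc c d, (b ↑y + x * ↑y))|)^2)
      ≤ ENNReal.ofReal ((d - c)⁻¹ + 1) *
        ∫⁻ y in Icc c d, ENNReal.ofReal ((a y - b y)^2 + (a' y - b' y)^2) := by
  haveI : Nonempty (Icc c d) := (nonempty_Icc.2 hcd.le).to_subtype
  set u : ℝ → ℝ := fun y => a y - b y with hu_def
  set u' : ℝ → ℝ := fun y => a' y - b' y with hu'_def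
  have hu : ContinuousOn u (Icc c d) := ha.sub hb
  have hu' : ContinuousOn u' (Icc c d) := ha'.sub hb'
  have hder : ∀ y ∈ Icc c d, HasDerivWithinAt u (u' y) (Icc c d) y :=
    fun y hy => (hda y hy).sub (hdb y hy)
  have hsob := sobolev_bound' hcd hu hu' hder
  set J : ℝ := ∫ z in Icc c d, (u z ^ 2 + u' z ^ 2) with hJ_def
  -- maximum of |u|
  obtain ⟨y₀, hy₀, hmax⟩ := isCompact_Icc.exists_isMaxOn (nonempty_Icc.2 hcd.le) hu.abs
  -- per-x bound on the difference of infima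
  have hper : ∀ x : ℝ, |(⨅ y : Icc c d, (a ↑y + x * ↑y)) -
      (⨅ y : Icc c d, (b ↑y + x * ↑y))| ≤ |u y₀| := by
    intro x
    have hfc : ContinuousOn (fun y => a y + x * y) (Icc c d) :=
      ha.add (continuous_const.mul continuous_id).continuousOn
    have hgc : ContinuousOn (fun y => b y + x * y) (Icc c d) :=
      hb.add (continuous_const.mul continuous_id).continuousOn
    obtain ⟨m, hm, hmin⟩ := isCompact_Icc.exists_isMinOn (nonempty_Icc.2 hcd.le) hfc
    obtain ⟨m', hm', hmin'⟩ := isCompact_Icc.exists_isMinOn (nonempty_Icc.2 hcd.le) hgc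
    have hbf : BddBelow (Set.range (fun y : Icc c d => a ↑y + x * ↑y)) :=
      ⟨a m + x * m, by rintro _ ⟨y, rfl⟩; exact hmin y.2⟩
    have hbg : BddBelow (Set.range (fun y : Icc c d => b ↑y + x * ↑y)) :=
      ⟨b m' + x * m', by rintro _ ⟨y, rfl⟩; exact hmin' y.2⟩
    refine abs_ciInf_sub_ciInf' _ _ hbf hbg _ (fun y => ?_)
    have heq : (a ↑y + x * ↑y) - (b ↑y + x * ↑y) = a ↑y - b ↑y := by ring
    rw [heq]
    exact hmax y.2
  have hbdd : BddAbove (Set.range (fun x : ℝ => |(⨅ y : Icc c d, (a ↑y + x * ↑y)) -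
      (⨅ y : Icc c d, (b ↑y + x * ↑y))|)) := ⟨|u y₀|, by rintro _ ⟨x, rfl⟩; exact hper x⟩
  have hS : (⨆ x : ℝ, |(⨅ y : Icc c d, (a ↑y + x * ↑y)) -
      (⨅ y : Icc c d, (b ↑y + x * ↑y))|) ≤ |u y₀| :=
    Real.iSup_le hper (abs_nonneg _)
  have hS0 : 0 ≤ ⨆ x : ℝ, |(⨅ y : Icc c d, (a ↑y + x * ↑y)) -
      (⨅ y : Icc c d, (b ↑y + x * ↑y))| :=
    le_trans (abs_nonneg _) (le_ciSup hbdd 0)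
  have hsq : (⨆ x : ℝ, |(⨅ y : Icc c d, (a ↑y + x * ↑y)) -
      (⨅ y : Icc c d, (b ↑y + x * ↑y))|)^2 ≤ ((d - c)⁻¹ + 1) * J := by
    have h1 := pow_le_pow_left₀ hS0 hS 2
    have h2 : |u y₀|^2 = u y₀ ^ 2 := sq_abs _
    exact h1.trans (h2 ▸ hsob y₀ hy₀)
  -- convert to lintegral
  have hIint : IntegrableOn (fun z => u z ^ 2 + u' z ^ 2) (Icc c d) :=
    ((hu.pow 2).add (hu'.pow 2)).integrableOn_compact isCompact_Icc
  have hconv : ENNReal.ofReal J =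
      ∫⁻ y in Icc c d, ENNReal.ofReal ((a y - b y)^2 + (a' y - b' y)^2) := by
    rw [hJ_def]
    exact ofReal_integral_eq_lintegral_ofReal hIint
      (Eventually.of_forall fun z => add_nonneg (sq_nonneg _) (sq_nonneg _))
  calc ENNReal.ofReal ((⨆ x : ℝ, |(⨅ y : Icc c d, (a ↑y + x * ↑y)) -
        (⨅ y : Icc c d, (b ↑y + x * ↑y))|)^2)
      ≤ ENNReal.ofReal (((d - c)⁻¹ + 1) * J) := ENNReal.ofReal_le_ofReal hsq
    _ = ENNReal.ofReal ((d - c)⁻¹ + 1) * ENNReal.ofReal J := by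
        rw [ENNReal.ofReal_mul (add_nonneg (inv_nonneg.2 (by linarith)) zero_le_one)]
    _ = _ := by rw [hconv]

/-- H^{0,1}((0,T)×[c,d]) convergence of the dual approximations `w n` to `W`
(L² convergence of functions and their y-derivatives) implies
`∫_0^T (sup_{x∈ℝ} |V_n(t,x) − V(t,x)|)² dt → 0`, where
`V_n(t,x) := inf_{y∈[c,d]}(w n t y + x·y)` and `V(t,x) := inf_{y∈[c,d]}(W t y + x·y)`. -/
theorem stmt_2 (T c d : ℝ) (hT : 0 < T) (hc : 0 < c) (hcd : c < d)
    (w : ℕ → ℝ → ℝ → ℝ) (W : ℝ → ℝ → ℝ)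
    (dw : ℕ → ℝ → ℝ → ℝ) (dW : ℝ → ℝ → ℝ)
    (hwc : ∀ n, ContinuousOn (fun p : ℝ × ℝ => w n p.1 p.2) (Ioo 0 T ×ˢ Icc c d))
    (hWc : ContinuousOn (fun p : ℝ × ℝ => W p.1 p.2) (Ioo 0 T ×ˢ Icc c d))
    (hwd : ∀ n, ∀ t ∈ Ioo 0 T, ∀ y ∈ Icc c d,
      HasDerivWithinAt (w n t) (dw n t y) (Icc c d) y)
    (hWd : ∀ t ∈ Ioo 0 T, ∀ y ∈ Icc c d,
      HasDerivWithinAt (W t) (dW t y) (Icc c d) y)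
    (hdwc : ∀ n, ContinuousOn (fun p : ℝ × ℝ => dw n p.1 p.2) (Ioo 0 T ×ˢ Icc c d))
    (hdWc : ContinuousOn (fun p : ℝ × ℝ => dW p.1 p.2) (Ioo 0 T ×ˢ Icc c d))
    (hconv : Tendsto (fun n => ∫⁻ t in Ioo 0 T, ∫⁻ y in Icc c d,
        ENNReal.ofReal ((w n t y - W t y)^2 + (dw n t y - dW t y)^2))
      atTop (nhds 0)) :
    Tendsto (fun n => ∫⁻ t in Ioo 0 T,
      ENNReal.ofReal ((⨆ x : ℝ, |(⨅ y : Icc c d, (w n t ↑y + x * ↑y)) -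
        (⨅ y : Icc c d, (W t ↑y + x * ↑y))|)^2)) atTop (nhds 0) := by
  set K := ENNReal.ofReal ((d - c)⁻¹ + 1) with hK
  have hpt : ∀ n, ∀ t ∈ Ioo 0 T,
      ENNReal.ofReal ((⨆ x : ℝ, |(⨅ y : Icc c d, (w n t ↑y + x * ↑y)) -
        (⨅ y : Icc c d, (W t ↑y + x * ↑y))|)^2)
      ≤ K * ∫⁻ y in Icc c d,
          ENNReal.ofReal ((w n t y - W t y)^2 + (dw n t y - dW t y)^2) := by
    intro n t ht
    have hmap : ContinuousOn (fun y : ℝ => (t, y)) (Icc c d) :=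
      (Continuous.prodMk_right t).continuousOn
    have hmem : ∀ y ∈ Icc c d, (t, y) ∈ Ioo 0 T ×ˢ Icc c d := fun y hy => ⟨ht, hy⟩
    exact pt_bound' hcd (w n t) (W t) (dw n t) (dW t)
      ((hwc n).comp hmap hmem) (hWc.comp hmap hmem)
      ((hdwc n).comp hmap hmem) (hdWc.comp hmap hmem)
      (hwd n t ht) (hWd t ht)
  have hbound : ∀ n, (∫⁻ t in Ioo 0 T,
      ENNReal.ofReal ((⨆ x : ℝ, |(⨅ y : Icc c d, (w n t ↑y + x * ↑y)) -
        (⨅ y : Icc c d, (W t ↑y + x * ↑y))|)^2))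
      ≤ K * ∫⁻ t in Ioo 0 T, ∫⁻ y in Icc c d,
          ENNReal.ofReal ((w n t y - W t y)^2 + (dw n t y - dW t y)^2) := by
    intro n
    rw [← lintegral_const_mul' K _ ENNReal.ofReal_ne_top]
    refine lintegral_mono_ae ?_
    exact (ae_restrict_iff' measurableSet_Ioo).2 (Eventually.of_forall (hpt n))
  have hlim : Tendsto (fun n => K * ∫⁻ t in Ioo 0 T, ∫⁻ y in Icc c d,
      ENNReal.ofReal ((w n t y - W t y)^2 + (dw n t y - dW t y)^2))
      atTop (nhds 0) := by
    have := ENNReal.Tendsto.const_mul (a := K) hconv (Or.inr ENNReal.ofReal_ne_top)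
    simpa using this
  exact tendsto_of_tendsto_of_tendsto_of_le_of_le tendsto_const_nhds hlim
    (fun n => zero_le) hbound
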